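/- arXiv:1901.05595 — 2 statements merged into one kernel-verified Lean document; each statement's English description precedes it below -/
import Mathlib

section
/- Let R be a symmetric idempotent n×n matrix with rank n − p, let ν_4 ≥ −2, and suppose either ν_4 ≠ −2 or limsup_{n→∞} tr(R∘R)/(n−p) < 1. If p/n → c ∈ [0,1), then Var(γ_0) = σ⁴(ν_4 tr(R∘R) + 2(n−p)) is bounded below and above by positive constant multiples of n for all large n. -/
/-!
For a symmetric idempotent `R`, `r_ii = ∑_j r_ij²`, so `0 ≤ r_ii² ≤ r_ii` and
`0 ≤ tr(R∘R) ≤ tr R = rank R = n - p`, while `n - p ≥ (1 - c)/2 · n` eventually.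
The upper bound is then `(|ν₄| + 2) n`. For the lower bound, if `tr(R∘R) ≤ L (n - p)`
then `ν₄ tr(R∘R) + 2(n - p) ≥ (2 + min(ν₄, 0) L)(n - p)`; the constant is positive with
`L = 1` when `ν₄ > -2`, and with any `L` strictly between the limsup and `1` otherwise.
-/

open Matrix Filter

namespace Matrix

variable {n K : Type*} [Fintype n]

theorem trace_eq_rank_of_isIdempotentElem [Field K] [DecidableEq n] {A : Matrix n n K}
    (hA : IsIdempotentElem A) : A.trace = A.rank := by
  have hlin : IsIdempotentElem A.toLin' := hA.map Matrix.toLinAlgEquiv'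
  rw [← trace_toLin'_eq, (LinearMap.IsIdempotentElem.isProj_range _ hlin).trace]
  rfl

theorem IsSymm.diag_eq_sum_sq_of_isIdempotentElem [CommSemiring K] {A : Matrix n n K}
    (hs : A.IsSymm) (hA : IsIdempotentElem A) (i : n) : A i i = ∑ j, A i j ^ 2 := by
  conv_lhs => rw [← hA.eq, mul_apply]
  simp only [sq, hs.apply i]

variable [Field K] [LinearOrder K] [IsStrictOrderedRing K]

theorem IsSymm.sq_diag_le_diag_of_isIdempotentElem {A : Matrix n n K} (hs : A.IsSymm)
    (hA : IsIdempotentElem A) (i : n) : A i i ^ 2 ≤ A i i := by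
  calc A i i ^ 2 ≤ ∑ j, A i j ^ 2 :=
        Finset.single_le_sum (fun j _ => sq_nonneg (A i j)) (Finset.mem_univ i)
    _ = A i i := (hs.diag_eq_sum_sq_of_isIdempotentElem hA i).symm

theorem IsSymm.sum_sq_diag_le_rank_of_isIdempotentElem [DecidableEq n] {A : Matrix n n K}
    (hs : A.IsSymm) (hA : IsIdempotentElem A) : ∑ i, A i i ^ 2 ≤ A.rank := by
  rw [← trace_eq_rank_of_isIdempotentElem hA]
  exact Finset.sum_le_sum fun i _ => hs.sq_diag_le_diag_of_isIdempotentElem hA i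

end Matrix

theorem eventually_le_mul_of_tendsto_div {p : ℕ → ℝ} {c b : ℝ}
    (hp : Tendsto (fun n => p n / n) atTop (nhds c)) (hcb : c < b) :
    ∀ᶠ n : ℕ in atTop, p n ≤ b * n := by
  filter_upwards [hp.eventually_lt_const hcb, eventually_gt_atTop 0] with n hn hn0
  rw [div_lt_iff₀ (by exact_mod_cast hn0)] at hn
  exact hn.le

theorem exists_lt_one_eventually_le_mul_of_limsup_div_lt_one {T q : ℕ → ℝ}
    (hq : ∀ᶠ n in atTop, 0 ≤ q n) (hTq : ∀ᶠ n in atTop, T n ≤ q n)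
    (hlim : limsup (fun n => T n / q n) atTop < 1) :
    ∃ L < 1, ∀ᶠ n in atTop, T n ≤ L * q n := by
  have hbdd : IsBoundedUnder (· ≤ ·) atTop fun n => T n / q n := by
    refine isBoundedUnder_of_eventually_le (a := 1) ?_
    filter_upwards [hq, hTq] with n hq hTq
    exact div_le_one_of_le₀ hTq hq
  obtain ⟨L, hlimL, hL1⟩ := exists_between hlim
  refine ⟨L, hL1, ?_⟩
  filter_upwards [eventually_lt_of_limsup_lt hlimL hbdd, hq, hTq] with n hn hq hTq
  rcases hq.eq_or_lt with hq0 | hqpos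
  · rw [← hq0] at hTq ⊢
    simpa using hTq
  · exact ((div_lt_iff₀ hqpos).1 hn).le

theorem mul_add_two_mul_le {ν T q : ℝ} (hT : 0 ≤ T) (hTq : T ≤ q) :
    ν * T + 2 * q ≤ (|ν| + 2) * q := by
  nlinarith [le_abs_self ν, abs_nonneg ν]

theorem two_add_min_mul_mul_le {ν T q L : ℝ} (hT : 0 ≤ T) (hTL : T ≤ L * q) :
    (2 + min ν 0 * L) * q ≤ ν * T + 2 * q := by
  nlinarith [min_le_left ν 0, min_le_right ν 0]

theorem two_add_min_mul_pos {ν L : ℝ} (hν : -2 ≤ ν) (hL : L ≤ 1) (h : ν ≠ -2 ∨ L < 1) :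
    0 < 2 + min ν 0 * L := by
  rcases min_cases ν 0 with ⟨hmin, _⟩ | ⟨hmin, _⟩ <;> rw [hmin]
  · have : -2 < ν ∨ L < 1 := h.imp_left fun hne => lt_of_le_of_ne hν hne.symm
    rcases le_or_gt 0 L with hL0 | hL0 <;> rcases this with h | h <;> nlinarith
  · simp

theorem stmt7_general (p : ℕ → ℕ) (R : (n : ℕ) → Matrix (Fin n) (Fin n) ℝ)
    (ν4 σ c : ℝ) (hσ : 0 < σ) (hν : -2 ≤ ν4)
    (hsymm : ∀ n, (R n).IsSymm) (hidem : ∀ n, R n * R n = R n)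
    (hrank : ∀ n, (R n).rank = n - p n)
    (hcase : ν4 ≠ -2 ∨
      Filter.limsup (fun n => (∑ i, (R n i i) ^ 2) / ((n : ℝ) - p n)) atTop < 1)
    (hc1 : c < 1)
    (hratio : Tendsto (fun n => (p n : ℝ) / (n : ℝ)) atTop (nhds c)) :
    ∃ c₁ c₂ : ℝ, 0 < c₁ ∧ 0 < c₂ ∧ ∀ᶠ (n : ℕ) in atTop,
      c₁ * (n : ℝ) ≤ σ ^ 4 * (ν4 * (∑ i, (R n i i) ^ 2) + 2 * ((n : ℝ) - p n)) ∧
      σ ^ 4 * (ν4 * (∑ i, (R n i i) ^ 2) + 2 * ((n : ℝ) - p n)) ≤ c₂ * (n : ℝ) := by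
  have hq : ∀ᶠ n : ℕ in atTop, (1 - c) / 2 * n ≤ n - p n := by
    filter_upwards [eventually_le_mul_of_tendsto_div hratio (b := (1 + c) / 2) (by linarith)]
      with n hn
    linarith
  have hq0 : ∀ᶠ n : ℕ in atTop, (0 : ℝ) ≤ n - p n :=
    hq.mono fun n hn => le_trans (by have := sub_pos.2 hc1; positivity) hn
  have hT : ∀ᶠ n : ℕ in atTop, ∑ i, R n i i ^ 2 ≤ n - p n := by
    filter_upwards [hq0] with n hn
    have hpn : p n ≤ n := by exact_mod_cast sub_nonneg.1 hn
    have := (hsymm n).sum_sq_diag_le_rank_of_isIdempotentElem (hidem n)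
    rwa [hrank n, Nat.cast_sub hpn] at this
  obtain ⟨L, hL1, hLcase, hTL⟩ : ∃ L ≤ 1, (ν4 ≠ -2 ∨ L < 1) ∧
      ∀ᶠ n : ℕ in atTop, ∑ i, R n i i ^ 2 ≤ L * (n - p n) := by
    rcases hcase with hne | hlim
    · exact ⟨1, le_rfl, .inl hne, by simpa using hT⟩
    · obtain ⟨L, hL1, hTL⟩ := exists_lt_one_eventually_le_mul_of_limsup_div_lt_one hq0 hT hlim
      exact ⟨L, hL1.le, .inr hL1, hTL⟩
  have hκ := two_add_min_mul_pos hν hL1 hLcase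
  refine ⟨σ ^ 4 * ((2 + min ν4 0 * L) * ((1 - c) / 2)), σ ^ 4 * (|ν4| + 2),
    by have := sub_pos.2 hc1; positivity, by positivity, ?_⟩
  filter_upwards [hq, hT, hTL] with n hq hT hTL
  have hT0 : 0 ≤ ∑ i, R n i i ^ 2 := by positivity
  constructor
  · calc σ ^ 4 * ((2 + min ν4 0 * L) * ((1 - c) / 2)) * n
          = σ ^ 4 * ((2 + min ν4 0 * L) * ((1 - c) / 2 * n)) := by ring
      _ ≤ σ ^ 4 * ((2 + min ν4 0 * L) * (n - p n)) := by gcongr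
      _ ≤ _ := by gcongr; exact two_add_min_mul_mul_le hT0 hTL
  · calc _ ≤ σ ^ 4 * ((|ν4| + 2) * (n - p n)) := by
          gcongr; exact mul_add_two_mul_le hT0 hT
      _ ≤ σ ^ 4 * (|ν4| + 2) * n := by
          rw [mul_assoc]; gcongr; linarith [(p n).cast_nonneg (α := ℝ)]

/-- If R_n is symmetric idempotent of rank n − p_n, ν₄ ≥ −2 with ν₄ ≠ −2 or
limsup tr(R∘R)/(n−p) < 1, and p/n → c ∈ [0,1), then
Var(γ₀) = σ⁴(ν₄ tr(R∘R) + 2(n−p)) is of exact order n. -/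
theorem stmt7 (p : ℕ → ℕ) (R : (n : ℕ) → Matrix (Fin n) (Fin n) ℝ)
    (ν4 σ c : ℝ) (hσ : 0 < σ) (hν : -2 ≤ ν4)
    (hsymm : ∀ n, (R n).IsSymm) (hidem : ∀ n, R n * R n = R n)
    (hrank : ∀ n, (R n).rank = n - p n) (hpn : ∀ n, p n ≤ n)
    (hcase : ν4 ≠ -2 ∨
      Filter.limsup (fun n => (∑ i, (R n i i) ^ 2) / ((n : ℝ) - p n)) atTop < 1)
    (hc0 : 0 ≤ c) (hc1 : c < 1)
    (hratio : Tendsto (fun n => (p n : ℝ) / (n : ℝ)) atTop (nhds c)) :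
    ∃ c₁ c₂ : ℝ, 0 < c₁ ∧ 0 < c₂ ∧ ∀ᶠ (n : ℕ) in atTop,
      c₁ * (n : ℝ) ≤ σ ^ 4 * (ν4 * (∑ i, (R n i i) ^ 2) + 2 * ((n : ℝ) - p n)) ∧
      σ ^ 4 * (ν4 * (∑ i, (R n i i) ^ 2) + 2 * ((n : ℝ) - p n)) ≤ c₂ * (n : ℝ) :=
  stmt7_general p R ν4 σ c hσ hν hsymm hidem hrank hcase hc1 hratio
end

section
/- Let ε_1,...,ε_n be independent with mean 0, variance σ², and common standardized fourth moment M_4, let R = (r_{ij}) be the residual maker matrix, and let e = Rε. Then E[Σ_{i=1}^n e_i⁴] = 3σ⁴ tr(R ∘ R) + ν_4 σ⁴ Σ_{i,j} r_{ij}⁴, where ν_4 = M_4 − 3. -/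
/-!
Write `e_i = ∑ j, r_ij ε_j`. For independent centred `S` and `Y` the odd cross moments in the
binomial expansion vanish, so `E (S + Y)⁴ = E S⁴ + 6 E S² E Y² + E Y⁴`; by induction over the
summands, `E e_i⁴ = M₄ σ⁴ ∑ j, r_ij⁴ + 3 σ⁴ ((∑ j, r_ij²)² - ∑ j, r_ij⁴)`. As `R` is symmetric
and idempotent, `∑ j, r_ij² = r_ii`, and summing over `i` gives the formula.
-/
open MeasureTheory ProbabilityTheory Matrix Finset
open scoped ENNReal

namespace MeasureTheory

variable {Ω : Type*} [MeasurableSpace Ω] {μ : Measure Ω}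

lemma MemLp.integrable_pow [IsFiniteMeasure μ] {X : Ω → ℝ} {n k : ℕ} (hX : MemLp X n μ)
    (hk : k ≤ n) : Integrable (fun ω => X ω ^ k) μ := by
  have hXk : MemLp X k μ := hX.mono_exponent (by exact_mod_cast hk)
  refine (integrable_norm_iff (hX.aestronglyMeasurable.pow k)).1 ?_
  simpa only [Pi.pow_apply, norm_pow] using hXk.integrable_norm_pow'

lemma memLp_of_integrable_pow {X : Ω → ℝ} {n : ℕ} (hn : Even n) (hn0 : n ≠ 0)
    (hX : AEStronglyMeasurable X μ) (h : Integrable (fun ω => X ω ^ n) μ) : MemLp X n μ := by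
  refine (integrable_norm_rpow_iff hX (by exact_mod_cast hn0) (by simp)).1 ?_
  simpa only [ENNReal.toReal_natCast, Real.rpow_natCast, Real.norm_eq_abs, hn.pow_abs] using h

end MeasureTheory

namespace ProbabilityTheory

variable {Ω : Type*} [MeasurableSpace Ω] {μ : Measure Ω} {X Y : Ω → ℝ}

lemma IndepFun.integral_add_pow [IsFiniteMeasure μ] {n : ℕ} (hXY : IndepFun X Y μ)
    (hX : MemLp X n μ) (hY : MemLp Y n μ) :
    ∫ ω, (X ω + Y ω) ^ n ∂μ
      = ∑ k ∈ range (n + 1), (∫ ω, X ω ^ k ∂μ) * (∫ ω, Y ω ^ (n - k) ∂μ) * n.choose k := by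
  have hpow : ∀ k ∈ range (n + 1),
      IndepFun (fun ω => X ω ^ k) (fun ω => Y ω ^ (n - k)) μ := fun k _ =>
    hXY.comp (measurable_id.pow_const k) (measurable_id.pow_const (n - k))
  have hint : ∀ k ∈ range (n + 1),
      Integrable (fun ω => X ω ^ k * Y ω ^ (n - k) * n.choose k) μ := fun k hk =>
    ((hpow k hk).integrable_mul (hX.integrable_pow (Nat.lt_succ_iff.1 (mem_range.1 hk)))
      (hY.integrable_pow (Nat.sub_le n k))).mul_const _
  simp_rw [add_pow]
  rw [integral_finsetSum _ hint]
  refine sum_congr rfl fun k hk => ?_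
  rw [integral_mul_const, (hpow k hk).integral_fun_mul_eq_mul_integral
    (hX.aestronglyMeasurable.pow k) (hY.aestronglyMeasurable.pow _)]

variable [IsProbabilityMeasure μ]

lemma IndepFun.integral_add_sq (hXY : IndepFun X Y μ) (hX : MemLp X 2 μ) (hY : MemLp Y 2 μ)
    (hX0 : ∫ ω, X ω ∂μ = 0) :
    ∫ ω, (X ω + Y ω) ^ 2 ∂μ = ∫ ω, X ω ^ 2 ∂μ + ∫ ω, Y ω ^ 2 ∂μ := by
  rw [hXY.integral_add_pow (by exact_mod_cast hX) (by exact_mod_cast hY)]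
  simp only [sum_range_succ, sum_range_zero, pow_zero, pow_one, integral_const, probReal_univ,
    smul_eq_mul, hX0, Nat.choose, tsub_self]
  ring

lemma IndepFun.integral_add_pow_four (hXY : IndepFun X Y μ) (hX : MemLp X 4 μ)
    (hY : MemLp Y 4 μ) (hX0 : ∫ ω, X ω ∂μ = 0) (hY0 : ∫ ω, Y ω ∂μ = 0) :
    ∫ ω, (X ω + Y ω) ^ 4 ∂μ
      = ∫ ω, X ω ^ 4 ∂μ + 6 * (∫ ω, X ω ^ 2 ∂μ) * (∫ ω, Y ω ^ 2 ∂μ) + ∫ ω, Y ω ^ 4 ∂μ := by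
  rw [hXY.integral_add_pow (by exact_mod_cast hX) (by exact_mod_cast hY)]
  simp only [sum_range_succ, sum_range_zero, pow_zero, pow_one, integral_const, probReal_univ,
    smul_eq_mul, hX0, hY0, Nat.choose, Nat.reduceSub]
  ring

section Family

variable {ι : Type*} {Y : ι → Ω → ℝ}

lemma iIndepFun.integral_finsetSum_sq (hind : iIndepFun Y μ) (hmeas : ∀ i, Measurable (Y i))
    (hY : ∀ i, MemLp (Y i) 2 μ) (hY0 : ∀ i, ∫ ω, Y i ω ∂μ = 0) (s : Finset ι) :
    ∫ ω, (∑ j ∈ s, Y j ω) ^ 2 ∂μ = ∑ j ∈ s, ∫ ω, Y j ω ^ 2 ∂μ := by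
  classical
  induction s using Finset.induction_on with
  | empty => simp
  | insert j s hj ih =>
    have hS : MemLp (∑ k ∈ s, Y k) 2 μ := memLp_finsetSum' s fun k _ => hY k
    have := (hind.indepFun_finsetSum_of_notMem hmeas hj).symm.integral_add_sq (hY j) hS (hY0 j)
    simp only [Finset.sum_apply] at this
    simp_rw [sum_insert hj]
    rw [this, ih]

lemma iIndepFun.integral_finsetSum_pow_four (hind : iIndepFun Y μ)
    (hmeas : ∀ i, Measurable (Y i)) (hY : ∀ i, MemLp (Y i) 4 μ)
    (hY0 : ∀ i, ∫ ω, Y i ω ∂μ = 0) (s : Finset ι) :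
    ∫ ω, (∑ j ∈ s, Y j ω) ^ 4 ∂μ
      = ∑ j ∈ s, ∫ ω, Y j ω ^ 4 ∂μ
        + 3 * ((∑ j ∈ s, ∫ ω, Y j ω ^ 2 ∂μ) ^ 2 - ∑ j ∈ s, (∫ ω, Y j ω ^ 2 ∂μ) ^ 2) := by
  classical
  induction s using Finset.induction_on with
  | empty => simp
  | insert j s hj ih =>
    have hS : MemLp (∑ k ∈ s, Y k) 4 μ := memLp_finsetSum' s fun k _ => hY k
    have hS0 : ∫ ω, (∑ k ∈ s, Y k) ω ∂μ = 0 := by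
      simp only [Finset.sum_apply]
      rw [integral_finsetSum s fun k _ => (hY k).integrable (by norm_num)]
      exact sum_eq_zero fun k _ => hY0 k
    have := (hind.indepFun_finsetSum_of_notMem hmeas hj).symm.integral_add_pow_four (hY j) hS
      (hY0 j) hS0
    simp only [Finset.sum_apply] at this
    have hsq := hind.integral_finsetSum_sq hmeas (fun i => (hY i).mono_exponent (by norm_num)) hY0 s
    simp_rw [sum_insert hj]
    rw [this, ih, hsq]
    ring

lemma iIndepFun.integral_finsetSum_mul_pow_four {ε : ι → Ω → ℝ} (hind : iIndepFun ε μ)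
    (hmeas : ∀ i, Measurable (ε i)) (hε : ∀ i, MemLp (ε i) 4 μ)
    (hε0 : ∀ i, ∫ ω, ε i ω ∂μ = 0) {σ m4 : ℝ} (hvar : ∀ i, ∫ ω, ε i ω ^ 2 ∂μ = σ ^ 2)
    (hm4 : ∀ i, ∫ ω, ε i ω ^ 4 ∂μ = m4) (a : ι → ℝ) (s : Finset ι) :
    ∫ ω, (∑ j ∈ s, a j * ε j ω) ^ 4 ∂μ
      = m4 * ∑ j ∈ s, a j ^ 4 + 3 * σ ^ 4 * ((∑ j ∈ s, a j ^ 2) ^ 2 - ∑ j ∈ s, a j ^ 4) := by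
  have hind' : iIndepFun (fun j ω => a j * ε j ω) μ :=
    hind.comp (fun j x => a j * x) fun j => measurable_const_mul (a j)
  rw [hind'.integral_finsetSum_pow_four (fun j => (hmeas j).const_mul (a j))
    (fun j => (hε j).const_mul (a j)) (fun j => by rw [integral_const_mul, hε0, mul_zero]) s]
  simp only [mul_pow, integral_const_mul, hvar, hm4, ← pow_mul, ← sum_mul]
  ring

end Family

end ProbabilityTheory

namespace Matrix

variable {n : Type*} [Fintype n] {α : Type*}

lemma IsSymm.sum_sq_apply_of_isIdempotentElem [Semiring α] {R : Matrix n n α} (hR : R.IsSymm)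
    (hR2 : IsIdempotentElem R) (i : n) : ∑ j, R i j ^ 2 = R i i := by
  conv_rhs => rw [← hR2.eq, mul_apply]
  simp only [sq, hR.apply]

variable {m : Type*} [Fintype m] [DecidableEq m] [CommRing α]

lemma isSymm_mul_inv_mul_transpose (X : Matrix n m α) : (X * (Xᵀ * X)⁻¹ * Xᵀ).IsSymm := by
  simp only [IsSymm, transpose_mul, transpose_transpose, transpose_nonsing_inv, Matrix.mul_assoc]

lemma isIdempotentElem_mul_inv_mul_transpose {X : Matrix n m α} (hX : IsUnit (Xᵀ * X)) :
    IsIdempotentElem (X * (Xᵀ * X)⁻¹ * Xᵀ) := by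
  have hinv := nonsing_inv_mul _ ((isUnit_iff_isUnit_det _).1 hX)
  calc X * (Xᵀ * X)⁻¹ * Xᵀ * (X * (Xᵀ * X)⁻¹ * Xᵀ)
      = X * ((Xᵀ * X)⁻¹ * (Xᵀ * X)) * ((Xᵀ * X)⁻¹ * Xᵀ) := by simp only [Matrix.mul_assoc]
    _ = X * (Xᵀ * X)⁻¹ * Xᵀ := by rw [hinv, Matrix.mul_one, Matrix.mul_assoc]

end Matrix

/-- For e = Rε with R the residual maker matrix and independent errors with
variance σ² and standardized fourth moment M₄:
E[Σ_i e_i⁴] = 3σ⁴ tr(R∘R) + ν₄σ⁴ Σ_{i,j} r_{ij}⁴, with ν₄ = M₄ − 3. -/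
theorem stmt9 {Ω : Type*} [MeasureSpace Ω] [IsProbabilityMeasure (ℙ : Measure Ω)]
    {n p : ℕ} (X : Matrix (Fin n) (Fin p) ℝ) (ε : Fin n → Ω → ℝ) (σ M4 : ℝ)
    (hσ : 0 < σ) (hX : IsUnit (Xᵀ * X))
    (R : Matrix (Fin n) (Fin n) ℝ) (hR : R = 1 - X * (Xᵀ * X)⁻¹ * Xᵀ)
    (hmeas : ∀ i, Measurable (ε i))
    (hindep : iIndepFun ε ℙ)
    (hmean : ∀ i, ∫ ω, ε i ω ∂ℙ = 0)
    (hvar : ∀ i, ∫ ω, (ε i ω) ^ 2 ∂ℙ = σ ^ 2)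
    (hM4int : ∀ i, Integrable (fun ω => (ε i ω) ^ 4) ℙ)
    (hM4 : ∀ i, ∫ ω, (ε i ω / σ) ^ 4 ∂ℙ = M4)
    (e : Ω → Fin n → ℝ) (he : ∀ ω, e ω = R.mulVec (fun i => ε i ω)) :
    ∫ ω, ∑ i, (e ω i) ^ 4 ∂ℙ
      = 3 * σ ^ 4 * (∑ i, (R i i) ^ 2)
        + (M4 - 3) * σ ^ 4 * ∑ i, ∑ j, (R i j) ^ 4 := by
  have hL4 : ∀ i, MemLp (ε i) 4 ℙ := fun i =>
    memLp_of_integrable_pow (by decide) (by decide) (hmeas i).aestronglyMeasurable (hM4int i)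
  have h4 : ∀ i, ∫ ω, ε i ω ^ 4 ∂ℙ = M4 * σ ^ 4 := fun i => by
    simp_rw [← hM4 i, div_pow]
    rw [integral_div, div_mul_cancel₀ _ (by positivity)]
  have hdiag : ∀ i, ∑ j, R i j ^ 2 = R i i := by
    subst hR
    exact (isSymm_one.sub (isSymm_mul_inv_mul_transpose X)).sum_sq_apply_of_isIdempotentElem
      (isIdempotentElem_mul_inv_mul_transpose hX).one_sub
  have he' : ∀ ω i, e ω i = ∑ j, R i j * ε j ω := fun ω i => by rw [he]; rfl
  have hint : ∀ i, Integrable (fun ω => (∑ j, R i j * ε j ω) ^ 4) ℙ := fun i =>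
    (memLp_finsetSum (p := ((4 : ℕ) : ℝ≥0∞)) univ fun j _ =>
      (hL4 j).const_mul (R i j)).integrable_pow le_rfl
  simp only [he']
  rw [integral_finsetSum _ fun i _ => hint i]
  simp only [hindep.integral_finsetSum_mul_pow_four hmeas hL4 hmean hvar h4, hdiag]
  simp only [sum_add_distrib, sum_sub_distrib, ← mul_sum]
  ring
end
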